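/- Under the assumptions that the strict-order relation is open and every point is in the closure of its strict down-set, for every open set U ⊆ X and every dense subset X₀ of X, the set V_U = {S ∈ 𝒮 : S ∩ U ≠ ∅} equals the union over y ∈ U ∩ X₀ of the complements of V^y, i.e. V_U = ⋃_{y ∈ U ∩ X₀} {S ∈ 𝒮 : y ∈ S}. -/

import Mathlib

open Set TopologicalSpace

/-- `H` is a lower set with respect to the strict order: `x ∈ H` and `y < x` imply `y ∈ H`. -/
def IsLowerLt {X : Type*} [LT X] (H : Set X) : Prop :=
  ∀ ⦃x⦄, x ∈ H → ∀ ⦃y⦄, y < x → y ∈ H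

/-- The space `𝒮` of topologically closed lower subsets of `X`. -/
def SSpace (X : Type*) [TopologicalSpace X] [LT X] : Type _ :=
  {S : Set X // IsClosed S ∧ IsLowerLt S}

/-- The topology on `𝒮` generated by the sets `V_U = {S : S ∩ U ≠ ∅}` for `U` open and
`V^K = {S : S ∩ K = ∅}` for `K` compact. -/
def STopology (X : Type*) [TopologicalSpace X] [LT X] : TopologicalSpace (SSpace X) :=
  TopologicalSpace.generateFrom
    ({W | ∃ U : Set X, IsOpen U ∧ W = {S : SSpace X | (S.1 ∩ U).Nonempty}} ∪
     {W | ∃ K : Set X, IsCompact K ∧ W = {S : SSpace X | S.1 ∩ K = ∅}})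

theorem isOpen_setOf_lt_of_isOpen_lt {X : Type*} [TopologicalSpace X] [LT X]
    (hR : IsOpen {p : X × X | p.1 < p.2}) (x : X) : IsOpen {y | y < x} :=
  hR.preimage (continuous_id.prodMk continuous_const)

theorem Dense.exists_mem_inter_lt {X : Type*} [TopologicalSpace X] [LT X] {X₀ U : Set X}
    (hX₀ : Dense X₀) (hU : IsOpen U) {x : X} (hxU : x ∈ U) (hx : x ∈ closure {y | y < x})
    (hlt : IsOpen {y | y < x}) : ∃ y ∈ U ∩ X₀, y < x := by
  obtain ⟨y, ⟨hyU, hyx⟩, hy₀⟩ :=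
    hX₀.inter_open_nonempty _ (hU.inter hlt) (mem_closure_iff.1 hx U hU hxU)
  exact ⟨y, ⟨hyU, hy₀⟩, hyx⟩

/-- `V_U = ⋃_{y ∈ U ∩ X₀} ¬V^y` for any open `U` and dense `X₀`, assuming the strict order
relation is open and every point lies in the closure of its strict down-set. -/
theorem vU_eq_iUnion (X : Type*) [TopologicalSpace X] [PartialOrder X]
    (hR : IsOpen {p : X × X | p.1 < p.2})
    (hsb : ∀ x : X, x ∈ closure {y | y < x})
    (X₀ : Set X) (hX₀ : Dense X₀) (U : Set X) (hU : IsOpen U) :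
    {S : SSpace X | (S.1 ∩ U).Nonempty} = ⋃ y ∈ U ∩ X₀, {S : SSpace X | y ∈ S.1} := by
  ext S
  simp only [mem_ofPred_eq, mem_iUnion, exists_prop]
  constructor
  · rintro ⟨x, hxS, hxU⟩
    obtain ⟨y, hy, hyx⟩ :=
      Dense.exists_mem_inter_lt hX₀ hU hxU (hsb x) (isOpen_setOf_lt_of_isOpen_lt hR x)
    exact ⟨y, hy, S.2.2 hxS hyx⟩
  · rintro ⟨y, ⟨hyU, -⟩, hyS⟩
    exact ⟨y, hyS, hyU⟩
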